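/- Let m_Q > 0 be as in the context. Let φ be a real Schwartz function on ℝ³ and ν ≥ 0 a real number with J(φ) + ν²/4 ≤ m_Q. If K₀(φ) ≤ 0 or K₂(φ) ≤ 0, then K₀(φ) ≤ −ν · ‖φ‖²_{L⁴(ℝ³)}. -/

import Mathlib

open MeasureTheory SchwartzMap
open scoped FourierTransform RealInnerProductSpace ENNReal

noncomputable section

abbrev E3 : Type := EuclideanSpace ℝ (Fin 3)

/-- Static Klein-Gordon energy. -/
def Jfun (φ : E3 → ℝ) : ℝ :=
  ∫ x : E3, (((φ x) ^ 2 + ‖gradient φ x‖ ^ 2) / 2 - (φ x) ^ 4 / 4)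

def K0fun (φ : E3 → ℝ) : ℝ :=
  ∫ x : E3, ((φ x) ^ 2 + ‖gradient φ x‖ ^ 2 - (φ x) ^ 4)

def K2fun (φ : E3 → ℝ) : ℝ :=
  ∫ x : E3, (‖gradient φ x‖ ^ 2 - (3 / 4) * (φ x) ^ 4)

def G0fun (φ : E3 → ℝ) : ℝ := Jfun φ - K0fun φ / 4

def G2fun (φ : E3 → ℝ) : ℝ := Jfun φ - K2fun φ / 3

/-- Squared homogeneous `Ḣ⁻¹` norm. -/
def Hm1sq (v : E3 → ℝ) : ℝ :=
  ∫ ξ : E3, ‖ξ‖⁻¹ ^ 2 * ‖𝓕 (fun x : E3 => (v x : ℂ)) ξ‖ ^ 2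

/-- Energy of the Klein-Gordon-Zakharov system. -/
def Efun (α : ℝ) (u w n v : E3 → ℝ) : ℝ :=
  (∫ x : E3, ((u x) ^ 2 + ‖gradient u x‖ ^ 2 + (w x) ^ 2) / 2)
    + (1 / 4) * ((α ^ 2)⁻¹ * Hm1sq v + ∫ x : E3, (n x) ^ 2)
    - (1 / 2) * ∫ x : E3, n x * (u x) ^ 2

/-- Squared `L²` norm for ‖φ‖²_{L⁴}: `(∫ φ⁴)^{1/2}`. -/
def L4sq (φ : E3 → ℝ) : ℝ := (∫ x : E3, (φ x) ^ 4) ^ ((1 : ℝ) / 2)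

/-- Laplacian. -/
def lap (f : E3 → ℝ) (x : E3) : ℝ :=
  ∑ i : Fin 3, fderiv ℝ (fun y => fderiv ℝ f y (EuclideanSpace.single i 1)) x
    (EuclideanSpace.single i 1)

/-- Time derivative. -/
def dt (u : ℝ → E3 → ℝ) (t : ℝ) (x : E3) : ℝ := deriv (fun s => u s x) t

/-- Second time derivative. -/
def dtt (u : ℝ → E3 → ℝ) (t : ℝ) (x : E3) : ℝ := deriv (fun s => dt u s x) t

/-- A classical solution of the Klein-Gordon-Zakharov system on a time interval `I`:
smooth in `(t,x)`, Schwartz in `x` with Schwartz seminorms locally bounded in `t`, and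
solving `∂ₜ²u - Δu + u = n u`, `α⁻² ∂ₜ²n - Δn = -Δ(u²)` pointwise. -/
structure IsKGZSol (α : ℝ) (I : Set ℝ) (u n : ℝ → E3 → ℝ) : Prop where
  smooth_u : ContDiffOn ℝ (⊤ : ℕ∞) (fun p : ℝ × E3 => u p.1 p.2) (I ×ˢ Set.univ)
  smooth_n : ContDiffOn ℝ (⊤ : ℕ∞) (fun p : ℝ × E3 => n p.1 p.2) (I ×ˢ Set.univ)
  schwartz_bdd : ∀ K : Set ℝ, K ⊆ I → IsCompact K → ∀ k m : ℕ, ∃ C : ℝ,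
    ∀ t ∈ K, ∀ x : E3,
      ‖x‖ ^ k * ‖iteratedFDeriv ℝ m (u t) x‖ ≤ C ∧
      ‖x‖ ^ k * ‖iteratedFDeriv ℝ m (dt u t) x‖ ≤ C ∧
      ‖x‖ ^ k * ‖iteratedFDeriv ℝ m (n t) x‖ ≤ C ∧
      ‖x‖ ^ k * ‖iteratedFDeriv ℝ m (dt n t) x‖ ≤ C
  eq_u : ∀ t ∈ I, ∀ x : E3, dtt u t x - lap (u t) x + u t x = n t x * u t x
  eq_n : ∀ t ∈ I, ∀ x : E3,
    (α ^ 2)⁻¹ * dtt n t x - lap (n t) x = - lap (fun y => (u t y) ^ 2) x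


lemma integrable_sq (φ : 𝓢(E3, ℝ)) : Integrable (fun x => (φ x)^2) := by
  have h := (φ.integrable (μ := volume)).bdd_mul (φ.continuous.aestronglyMeasurable)
    (ae_of_all _ fun x => SchwartzMap.norm_le_seminorm ℝ φ x)
  simpa [pow_two] using h

lemma integrable_pow4 (φ : 𝓢(E3, ℝ)) : Integrable (fun x => (φ x)^4) := by
  have h := (integrable_sq φ).bdd_mul ((φ.continuous.pow 2).aestronglyMeasurable)
    (ae_of_all _ fun x => by
      have := SchwartzMap.norm_le_seminorm ℝ φ x
      have h0 : (0:ℝ) ≤ ‖φ x‖ := norm_nonneg _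
      calc ‖(φ x)^2‖ = ‖φ x‖^2 := by rw [norm_pow]
      _ ≤ ((SchwartzMap.seminorm ℝ 0 0) φ)^2 := by nlinarith)
  have heq : (fun x => (φ x)^4) = fun x => (φ x)^2 * (φ x)^2 := by funext x; ring
  rw [heq]; exact h

lemma grad_norm_eq (f : E3 → ℝ) (x : E3) : ‖gradient f x‖ = ‖fderiv ℝ f x‖ := by
  rw [gradient]; exact LinearIsometryEquiv.norm_map _ _

lemma integrable_gradsq (φ : 𝓢(E3, ℝ)) : Integrable (fun x => ‖gradient (⇑φ) x‖^2) := by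
  have hg : ∀ x : E3, ‖gradient (⇑φ) x‖ = ‖(SchwartzMap.fderivCLM ℝ E3 ℝ φ) x‖ := by
    intro x; rw [grad_norm_eq, SchwartzMap.fderivCLM_apply]
  have hi : Integrable (fun x => ‖(SchwartzMap.fderivCLM ℝ E3 ℝ φ) x‖) :=
    ((SchwartzMap.fderivCLM ℝ E3 ℝ φ).integrable (μ := volume)).norm
  have h := hi.bdd_mul ((SchwartzMap.fderivCLM ℝ E3 ℝ φ).continuous.norm.aestronglyMeasurable)
    (ae_of_all _ fun x => by
      simpa using SchwartzMap.norm_le_seminorm ℝ (SchwartzMap.fderivCLM ℝ E3 ℝ φ) x)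
  simp only [hg, pow_two]
  exact h

lemma J_eq (φ : 𝓢(E3, ℝ)) : Jfun ⇑φ =
    ((∫ x : E3, (φ x)^2) + ∫ x : E3, ‖gradient (⇑φ) x‖^2)/2 - (∫ x : E3, (φ x)^4)/4 := by
  have ha := integrable_sq φ
  have hb := integrable_gradsq φ
  have hc := integrable_pow4 φ
  have h1 : Integrable (fun x : E3 => ((φ x)^2 + ‖gradient (⇑φ) x‖^2)/2) volume :=
    (ha.add hb).div_const 2
  have h2 : Integrable (fun x : E3 => (φ x)^4/4) volume := hc.div_const 4
  rw [Jfun, integral_sub h1 h2, integral_div, integral_div, integral_add ha hb]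

lemma K0_eq (φ : 𝓢(E3, ℝ)) : K0fun ⇑φ =
    ((∫ x : E3, (φ x)^2) + ∫ x : E3, ‖gradient (⇑φ) x‖^2) - (∫ x : E3, (φ x)^4) := by
  have ha := integrable_sq φ
  have hb := integrable_gradsq φ
  have hc := integrable_pow4 φ
  have h1 : Integrable (fun x : E3 => (φ x)^2 + ‖gradient (⇑φ) x‖^2) volume := ha.add hb
  rw [K0fun, integral_sub h1 hc, integral_add ha hb]

lemma K2_eq (φ : 𝓢(E3, ℝ)) : K2fun ⇑φ =
    (∫ x : E3, ‖gradient (⇑φ) x‖^2) - (3/4) * (∫ x : E3, (φ x)^4) := by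
  have hb := integrable_gradsq φ
  have hc := integrable_pow4 φ
  have h2 : Integrable (fun x : E3 => (3/4 : ℝ) * (φ x)^4) volume := hc.const_mul _
  rw [K2fun, integral_sub hb h2, integral_const_mul _ _]

lemma pos_of_support (f : E3 → ℝ) (hf : Continuous f) (hnn : ∀ x, 0 ≤ f x)
    (hint : Integrable f) (x₀ : E3) (hx₀ : f x₀ ≠ 0) : 0 < ∫ x, f x := by
  rw [integral_pos_iff_support_of_nonneg hnn hint]
  have hopen : IsOpen (Function.support f) := by
    have h : Function.support f = f ⁻¹' {0}ᶜ := by ext x; simp [Function.mem_support]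
    rw [h]
    exact (isClosed_singleton.preimage hf).isOpen_compl
  exact hopen.measure_pos volume ⟨x₀, hx₀⟩

lemma phi_ne_exists {φ : 𝓢(E3, ℝ)} (h : φ ≠ 0) : ∃ x, φ x ≠ 0 := by
  by_contra hc
  push_neg at hc
  exact h (SchwartzMap.ext fun x => by simpa using hc x)

lemma const_eq_zero (φ : 𝓢(E3, ℝ)) (h : ∀ x y : E3, φ x = φ y) : φ = 0 := by
  have hint := φ.integrable (μ := volume)
  have hco : ⇑φ = fun _ => φ 0 := funext fun x => h x 0
  rw [hco] at hint
  rcases (integrable_const_iff).1 hint with h0 | hfin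
  · exact SchwartzMap.ext fun x => by rw [h x 0]; simpa using h0
  · exfalso
    exact measure_ne_top (volume : Measure E3) Set.univ
      (MeasureTheory.measure_univ_of_isAddLeftInvariant (volume : Measure E3))

def dilEquiv (r : ℝ) (hr : r ≠ 0) : E3 ≃L[ℝ] E3 :=
  (LinearEquiv.smulOfNeZero ℝ E3 r hr).toContinuousLinearEquiv

def dil (r : ℝ) (hr : r ≠ 0) (φ : 𝓢(E3, ℝ)) : 𝓢(E3, ℝ) :=
  SchwartzMap.compCLMOfContinuousLinearEquiv ℝ (dilEquiv r hr) φ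

lemma coe_scaled (φ : 𝓢(E3, ℝ)) (t r : ℝ) (hr : r ≠ 0) :
    ⇑(t • dil r hr φ) = fun x => t * φ (r • x) := rfl

lemma comp_smul_int (f : E3 → ℝ) (r : ℝ) (hr : 0 < r) :
    ∫ x : E3, f (r • x) = (r ^ 3)⁻¹ * ∫ x, f x := by
  have := MeasureTheory.Measure.integral_comp_smul_of_nonneg (volume : Measure E3) f r
    (hR := hr.le)
  simpa using this

lemma intsq_scaled (φ : 𝓢(E3, ℝ)) (t r : ℝ) (hr : 0 < r) :
    ∫ x : E3, ((t • dil r hr.ne' φ) x)^2 = t^2 * ((r^3)⁻¹ * ∫ x : E3, (φ x)^2) := by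
  have h : ∀ x : E3, ((t • dil r hr.ne' φ) x)^2 = t^2 * (fun y => (φ y)^2) (r • x) := by
    intro x; show (t * φ (r • x))^2 = _; ring
  simp_rw [h]
  rw [integral_const_mul _ _]
  congr 1
  exact comp_smul_int (fun y => (φ y)^2) r hr

lemma int4_scaled (φ : 𝓢(E3, ℝ)) (t r : ℝ) (hr : 0 < r) :
    ∫ x : E3, ((t • dil r hr.ne' φ) x)^4 = t^4 * ((r^3)⁻¹ * ∫ x : E3, (φ x)^4) := by
  have h : ∀ x : E3, ((t • dil r hr.ne' φ) x)^4 = t^4 * (fun y => (φ y)^4) (r • x) := by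
    intro x; show (t * φ (r • x))^4 = _; ring
  simp_rw [h]
  rw [integral_const_mul _ _]
  congr 1
  exact comp_smul_int (fun y => (φ y)^4) r hr

lemma fderiv_dil (φ : 𝓢(E3, ℝ)) (t r : ℝ) (x : E3) :
    fderiv ℝ (fun y => t * φ (r • y)) x = (t * r) • fderiv ℝ (⇑φ) (r • x) := by
  have h1 : HasFDerivAt (fun y : E3 => r • y) (r • ContinuousLinearMap.id ℝ E3) x :=
    (hasFDerivAt_id x).const_smul r
  have h2 : HasFDerivAt (fun y : E3 => φ (r • y))
      ((fderiv ℝ (⇑φ) (r • x)).comp (r • ContinuousLinearMap.id ℝ E3)) x :=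
    (φ.differentiableAt.hasFDerivAt).comp x h1
  have h3 : HasFDerivAt (fun y : E3 => t * φ (r • y))
      (t • ((fderiv ℝ (⇑φ) (r • x)).comp (r • ContinuousLinearMap.id ℝ E3))) x := h2.const_smul t
  rw [h3.fderiv]
  ext y
  simp [mul_comm, mul_assoc, ContinuousLinearMap.smul_apply]

lemma gradsq_dil (φ : 𝓢(E3, ℝ)) (t r : ℝ) (x : E3) :
    ‖gradient (fun y => t * φ (r • y)) x‖^2 = t^2 * r^2 * ‖gradient (⇑φ) (r • x)‖^2 := by
  rw [grad_norm_eq, grad_norm_eq, fderiv_dil, norm_smul]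
  simp [mul_pow, Real.norm_eq_abs, sq_abs]

lemma intgradsq_scaled (φ : 𝓢(E3, ℝ)) (t r : ℝ) (hr : 0 < r) :
    ∫ x : E3, ‖gradient (⇑(t • dil r hr.ne' φ)) x‖^2
      = t^2 * r^2 * ((r^3)⁻¹ * ∫ x : E3, ‖gradient (⇑φ) x‖^2) := by
  rw [coe_scaled]
  have h : ∀ x : E3, ‖gradient (fun y => t * φ (r • y)) x‖^2
      = t^2*r^2 * (fun y => ‖gradient (⇑φ) y‖^2) (r • x) := fun x => gradsq_dil φ t r x
  simp_rw [h]
  rw [integral_const_mul _ _]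
  congr 1
  exact comp_smul_int (fun y => ‖gradient (⇑φ) y‖^2) r hr

lemma scaled_ne_zero (φ : 𝓢(E3, ℝ)) (t r : ℝ) (ht : t ≠ 0) (hr : r ≠ 0) (hφ : φ ≠ 0) :
    t • dil r hr φ ≠ 0 := by
  obtain ⟨x₀, hx₀⟩ := phi_ne_exists hφ
  intro h
  have h1 : (t • dil r hr φ) (r⁻¹ • x₀) = t * φ (r • r⁻¹ • x₀) := rfl
  rw [h] at h1
  rw [smul_smul, mul_inv_cancel₀ hr, one_smul] at h1
  simp only [SchwartzMap.zero_apply] at h1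
  exact mul_ne_zero ht hx₀ h1.symm

lemma scaleK2 (u v w c : ℝ) (hu : u ≠ 0) (hv : v ≠ 0) (hc : c ≠ 0) (hwc : w^2*c = v^2) :
    (2*(u/v)*w)^2*(u/v)^2*(((u/v)^3)⁻¹*(3*v^2)) - 3/4*((2*(u/v)*w)^4*(((u/v)^3)⁻¹*c)) = 0 := by
  field_simp
  linear_combination (-48*u*w^2) * hwc

lemma scaleJ (u v w c : ℝ) (hu : u ≠ 0) (hv : v ≠ 0) (hc : c ≠ 0) (hwc : w^2*c = v^2) :
    ((2*(u/v)*w)^2*(((u/v)^3)⁻¹*(u^2)) + (2*(u/v)*w)^2*(u/v)^2*(((u/v)^3)⁻¹*(3*v^2)))/2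
      - (2*(u/v)*w)^4*(((u/v)^3)⁻¹*c)/4 = 4*u*v^3/c := by
  field_simp
  linear_combination (-16)*(w^2*c - v^2) * hwc

lemma key_ineq (u v c : ℝ) (hu : 0 < u) (hv : 0 < v) (hc : 0 < c)
    (h4v : 4*v^2 ≤ c) (hlt : c < u^2+3*v^2) (huv : v < u) :
    4*u*v^3/c < (u^2+3*v^2)/2 - c/4 := by
  rw [div_lt_iff₀ hc]
  have huvsq : 0 < (u-v)^2 := pow_pos (sub_pos.2 huv) 2
  have huv2 : 0 < u^2 - v^2 := by nlinarith
  have H1 : 0 < (u^2+3*v^2-c) * (8*v^2*(u-v)^2) :=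
    mul_pos (sub_pos.2 hlt) (mul_pos (by positivity) huvsq)
  have H2 : 0 ≤ (c-4*v^2) * ((u-v)^2*(u^2+2*u*v+9*v^2)) :=
    mul_nonneg (by linarith) (mul_nonneg huvsq.le (by positivity))
  have H3 : 0 ≤ (c-4*v^2) * (u^2+3*v^2-c) := mul_nonneg (by linarith) (by linarith)
  nlinarith [H1, H2, H3, huv2]

lemma sqrt_cancel (x y : ℝ) (hx : 0 ≤ x) (hy : 0 ≤ y) (h : x^2 ≤ y^2) : x ≤ y := by
  nlinarith [h, hx, hy]

lemma nu_sq_ineq (S c ν : ℝ) (hc : 0 < c) (h5 : (S/2 - c/4 + ν^2/4)*(4*c) ≤ S^2) :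
    ν^2*c ≤ (c - S)^2 := by nlinarith [h5]

set_option maxHeartbeats 1000000

theorem variational_estimate_nonpos    (m_Q : ℝ) (hmQ_pos : 0 < m_Q)
    (hmQ_K0 : ∀ ψ : 𝓢(E3, ℝ), ψ ≠ 0 → K0fun ⇑ψ = 0 → m_Q ≤ Jfun ⇑ψ)
    (hmQ_K2 : ∀ ψ : 𝓢(E3, ℝ), ψ ≠ 0 → K2fun ⇑ψ = 0 → m_Q ≤ Jfun ⇑ψ)
    (φ : 𝓢(E3, ℝ)) (ν : ℝ) (hν : 0 ≤ ν)
    (hJ : Jfun ⇑φ + ν ^ 2 / 4 ≤ m_Q)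
    (hK : K0fun ⇑φ ≤ 0 ∨ K2fun ⇑φ ≤ 0) :
    K0fun ⇑φ ≤ - (ν * L4sq ⇑φ) := by
  classical
  set a := ∫ x : E3, (φ x)^2 with ha_def
  set b := ∫ x : E3, ‖gradient (⇑φ) x‖^2 with hb_def
  set c := ∫ x : E3, (φ x)^4 with hc_def
  have hK0φ : K0fun ⇑φ = a + b - c := K0_eq φ
  have hK2φ : K2fun ⇑φ = b - (3/4)*c := K2_eq φ
  have hJφ : Jfun ⇑φ = (a+b)/2 - c/4 := J_eq φ
  have hL4 : L4sq ⇑φ = Real.sqrt c := by rw [L4sq, Real.sqrt_eq_rpow]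
  have hcnn : 0 ≤ c := integral_nonneg (fun x => by positivity)
  have hbnn : 0 ≤ b := integral_nonneg (fun x => by positivity)
  by_cases hc0 : c = 0
  · -- degenerate case : φ = 0
    have hφ0 : φ = 0 := by
      by_contra hne
      obtain ⟨x₀, hx₀⟩ := phi_ne_exists hne
      have hpos : 0 < c := pos_of_support (fun x => (φ x)^4)
        (by fun_prop) (fun x => by positivity) (integrable_pow4 φ) x₀ (by positivity)
      exact hpos.ne' hc0
    have ha0 : a = 0 := by
      rw [ha_def, hφ0]
      simp
    have hb0 : b = 0 := by
      rw [hb_def, hφ0]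
      have hg : ∀ x : E3, ‖gradient (⇑(0 : 𝓢(E3, ℝ))) x‖^2 = 0 := by
        intro x
        have h0 : ⇑(0 : 𝓢(E3, ℝ)) = fun _ : E3 => (0:ℝ) := rfl
        rw [h0, gradient_fun_const]
        simp
      simp_rw [hg]
      simp
    rw [hK0φ, hL4, ha0, hb0, hc0]
    simp
  · have hcpos : 0 < c := lt_of_le_of_ne hcnn (Ne.symm hc0)
    have hφne : φ ≠ 0 := by
      intro h
      apply hc0
      rw [hc_def, h]
      simp
    have hapos : 0 < a := by
      obtain ⟨x₀, hx₀⟩ := phi_ne_exists hφne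
      exact pos_of_support (fun x => (φ x)^2) (by fun_prop) (fun x => by positivity)
        (integrable_sq φ) x₀ (by positivity)
    -- Key inequality: m_Q ≤ (a+b)^2/(4c), via scalar scaling with K0 constraint
    have habpos : 0 < a + b := by linarith
    have hkey : m_Q ≤ (a+b)^2/(4*c) := by
      have hlpos : 0 < Real.sqrt ((a+b)/c) := Real.sqrt_pos.2 (div_pos habpos hcpos)
      have hl2 : (Real.sqrt ((a+b)/c))^2 = (a+b)/c := Real.sq_sqrt (div_pos habpos hcpos).le
      have h1pos : (0:ℝ) < 1 := one_pos
      have hne : Real.sqrt ((a+b)/c) • dil 1 h1pos.ne' φ ≠ 0 :=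
        scaled_ne_zero φ _ 1 hlpos.ne' h1pos.ne' hφne
      have hK0Ψ := K0_eq (Real.sqrt ((a+b)/c) • dil 1 h1pos.ne' φ)
      rw [intsq_scaled φ _ 1 h1pos, intgradsq_scaled φ _ 1 h1pos, int4_scaled φ _ 1 h1pos,
        ← ha_def, ← hb_def, ← hc_def] at hK0Ψ
      have hJΨ := J_eq (Real.sqrt ((a+b)/c) • dil 1 h1pos.ne' φ)
      rw [intsq_scaled φ _ 1 h1pos, intgradsq_scaled φ _ 1 h1pos, int4_scaled φ _ 1 h1pos,
        ← ha_def, ← hb_def, ← hc_def] at hJΨ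
      have hl4 : (Real.sqrt ((a+b)/c))^4 = ((a+b)/c) * ((a+b)/c) := by
        rw [show (4:ℕ) = 2*2 from rfl, pow_mul, hl2]; ring
      have h0 : K0fun ⇑(Real.sqrt ((a+b)/c) • dil 1 h1pos.ne' φ) = 0 := by
        rw [hK0Ψ, hl4, hl2]
        field_simp
        ring
      have hval : Jfun ⇑(Real.sqrt ((a+b)/c) • dil 1 h1pos.ne' φ) = (a+b)^2/(4*c) := by
        rw [hJΨ, hl4, hl2]
        field_simp
        ring
      have hmq := hmQ_K0 _ hne h0
      rwa [hval] at hmq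
    -- hJ in integral form
    have hJle : (a+b)/2 - c/4 + ν^2/4 ≤ m_Q := by rw [hJφ] at hJ; exact hJ
    -- Show K0 ≤ 0 in both cases
    have hK0le : a + b - c ≤ 0 := by
      rcases hK with h0 | h2
      · rw [hK0φ] at h0; exact h0
      · rw [hK2φ] at h2
        by_contra hgt
        push_neg at hgt
        -- b > 0
        have hbpos : 0 < b := by
          rcases lt_or_eq_of_le hbnn with h | h
          · exact h
          · exfalso
            have hgz : ∀ x : E3, fderiv ℝ (⇑φ) x = 0 := by
              intro x
              by_contra hfx
              have hcont : Continuous (fun x : E3 => ‖gradient (⇑φ) x‖^2) := by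
                have heq : (fun x : E3 => ‖gradient (⇑φ) x‖^2)
                    = fun x => ‖(SchwartzMap.fderivCLM ℝ E3 ℝ φ) x‖^2 := by
                  funext y; rw [grad_norm_eq, SchwartzMap.fderivCLM_apply]
                rw [heq]
                exact (SchwartzMap.fderivCLM ℝ E3 ℝ φ).continuous.norm.pow 2
              have hnx : ‖gradient (⇑φ) x‖^2 ≠ 0 := by
                rw [grad_norm_eq]
                exact pow_ne_zero _ (norm_ne_zero_iff.2 hfx)
              have hpos : 0 < b := by
                rw [hb_def]
                exact pos_of_support _ hcont (fun y => by positivity)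
                  (integrable_gradsq φ) x hnx
              exact hpos.ne' h.symm
            have hconst : ∀ x y : E3, φ x = φ y :=
              is_const_of_fderiv_eq_zero φ.differentiable hgz
            exact hφne (const_eq_zero φ hconst)
        have hdiv3 : 0 < b/3 := by linarith
        have hdivc : 0 < b/(3*c) := by positivity
        obtain ⟨u, hu2, hupos⟩ : ∃ u : ℝ, u^2 = a ∧ 0 < u :=
          ⟨Real.sqrt a, Real.sq_sqrt hapos.le, Real.sqrt_pos.2 hapos⟩
        obtain ⟨v, hv2, hvpos⟩ : ∃ v : ℝ, v^2 = b/3 ∧ 0 < v :=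
          ⟨Real.sqrt _, Real.sq_sqrt hdiv3.le, Real.sqrt_pos.2 hdiv3⟩
        obtain ⟨w, hw2, hwpos⟩ : ∃ w : ℝ, w^2 = b/(3*c) ∧ 0 < w :=
          ⟨Real.sqrt _, Real.sq_sqrt hdivc.le, Real.sqrt_pos.2 hdivc⟩
        have hrpos : 0 < u/v := div_pos hupos hvpos
        have htpos : 0 < 2*(u/v)*w := by positivity
        have hne2 : (2*(u/v)*w) • dil (u/v) hrpos.ne' φ ≠ 0 :=
          scaled_ne_zero φ _ _ htpos.ne' hrpos.ne' hφne
        have hb3 : b = 3*v^2 := by rw [hv2]; ring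
        have hwc : w^2*c = b/3 := by rw [hw2]; field_simp
        have hK2Ψ := K2_eq ((2*(u/v)*w) • dil (u/v) hrpos.ne' φ)
        rw [intgradsq_scaled φ _ _ hrpos, int4_scaled φ _ _ hrpos,
          ← hb_def, ← hc_def] at hK2Ψ
        have hwc' : w^2*c = v^2 := hwc.trans hv2.symm
        have h20 : K2fun ⇑((2*(u/v)*w) • dil (u/v) hrpos.ne' φ) = 0 := by
          rw [hK2Ψ, hb3]
          linear_combination scaleK2 u v w c hupos.ne' hvpos.ne' hcpos.ne' hwc'
        have hJΨ := J_eq ((2*(u/v)*w) • dil (u/v) hrpos.ne' φ)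
        rw [intsq_scaled φ _ _ hrpos, intgradsq_scaled φ _ _ hrpos, int4_scaled φ _ _ hrpos,
          ← ha_def, ← hb_def, ← hc_def] at hJΨ
        have hval : Jfun ⇑((2*(u/v)*w) • dil (u/v) hrpos.ne' φ) = 4*u*v^3/c := by
          rw [hJΨ, hb3, ← hu2]
          linear_combination scaleJ u v w c hupos.ne' hvpos.ne' hcpos.ne' hwc'
        have hcon : m_Q ≤ 4*u*v^3/c := by
          have hmq := hmQ_K2 _ hne2 h20
          rwa [hval] at hmq
        have hab : a + b = u^2 + 3*v^2 := by rw [hu2, hb3]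
        have hstrict : 4*u*v^3/c < (a+b)/2 - c/4 := by
          have h4v : 4*v^2 ≤ c := by linarith only [hv2, h2]
          have hlt : c < u^2 + 3*v^2 := by linarith only [hu2, hv2, hgt]
          have hvu2 : v^2 < u^2 := by linarith only [hu2, hv2, hgt, h4v]
          have huv : v < u := lt_of_pow_lt_pow_left₀ 2 hupos.le hvu2
          rw [hab]
          exact key_ineq u v c hupos hvpos hcpos h4v hlt huv
        linarith only [hJle, hcon, hstrict, sq_nonneg ν]
    -- conclude
    rw [hK0φ, hL4]
    set s := Real.sqrt c with hs_def
    have hs2 : s^2 = c := Real.sq_sqrt hcnn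
    have hspos : 0 < s := Real.sqrt_pos.2 hcpos
    have h4 : (a+b)/2 - c/4 + ν^2/4 ≤ (a+b)^2/(4*c) := le_trans hJle hkey
    have h5 : ((a+b)/2 - c/4 + ν^2/4) * (4*c) ≤ (a+b)^2 := by
      have h5a := (le_div_iff₀ (by positivity : (0:ℝ) < 4*c)).1 h4
      linarith only [h5a]
    have hineq : ν^2 * c ≤ (c - (a+b))^2 := nu_sq_ineq (a+b) c ν hcpos h5
    have hx : 0 ≤ ν * s := mul_nonneg hν hspos.le
    have hy : 0 ≤ c - (a+b) := by linarith only [hK0le]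
    have hxy : (ν*s)^2 ≤ (c - (a+b))^2 := by
      have hh : (ν*s)^2 = ν^2 * c := by rw [mul_pow, hs2]
      rw [hh]; exact hineq
    have h6 := sqrt_cancel _ _ hx hy hxy
    linarith only [h6]

end
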